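/- Weighted retrieval (regularized form of Corollary 3, part 1): let h_1, …, h_t be pairwise distinct vectors in ℝ^d and let p_1, …, p_t > 0 satisfy Σ_k p_k = 1. For every index j ∈ {1, …, t}, as σ → 0⁺ the quantity (4πσ)^{d/2} ∫_{ℝ^d} S(θ) · conj(w_j(θ)) · e^{−σ‖θ‖²} dθ (integrated componentwise in ℂ^d) converges to p_j · h_j. -/

import Mathlib

open MeasureTheory Real Filter RealInnerProductSpace

/-- The weighted derivative characteristic summary
`S(θ) = i ∑ₖ pₖ hₖ e^{i⟨θ,hₖ⟩}` (componentwise). -/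
noncomputable def weightedSummary {d t : ℕ} (h : Fin t → EuclideanSpace ℝ (Fin d))
    (p : Fin t → ℝ) (θ : EuclideanSpace ℝ (Fin d)) : Fin d → ℂ :=
  fun l => Complex.I *
    ∑ k, (p k : ℂ) * (h k l : ℂ) * Complex.exp (Complex.I * (⟪θ, h k⟫ : ℝ))

/-- The spectral query `w_j(θ) = (i/(2π)^d) e^{i⟨θ,h_j⟩}`. -/
noncomputable def weightedQuery {d t : ℕ} (h : Fin t → EuclideanSpace ℝ (Fin d))
    (j : Fin t) (θ : EuclideanSpace ℝ (Fin d)) : ℂ :=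
  (Complex.I / ((2 * Real.pi) ^ d : ℝ)) *
    Complex.exp (Complex.I * (⟪θ, h j⟫ : ℝ))

/-!
Since `i · conj i = 1`, the integrand is `(2π)^{-d} ∑ₖ pₖ hₖ e^{i⟨hₖ - hⱼ, θ⟩} e^{-σ‖θ‖²}`, and
the Gaussian Fourier transform evaluates the regularized integral exactly: the factor
`(4πσ)^{d/2}` cancels `(π/σ)^{d/2} (2π)^{-d}`, leaving `∑ₖ pₖ hₖ e^{-‖hₖ - hⱼ‖²/(4σ)}`.
As `σ → 0⁺` the terms with `hₖ ≠ hⱼ` vanish and only `pⱼ hⱼ` survives.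
-/

open Complex

theorem four_pi_mul_rpow_mul_integral_cexp_neg_mul_sq_norm_add
    {V : Type*} [NormedAddCommGroup V] [InnerProductSpace ℝ V] [FiniteDimensional ℝ V]
    [MeasurableSpace V] [BorelSpace V] {σ : ℝ} (hσ : 0 < σ) (w : V) :
    (((4 * π * σ) ^ ((Module.finrank ℝ V : ℝ) / 2) : ℝ) : ℂ) *
        ∫ v : V, cexp (-(σ : ℂ) * ‖v‖ ^ 2 + I * ⟪w, v⟫) =
      (((2 * π) ^ Module.finrank ℝ V : ℝ) : ℂ) * (rexp (-‖w‖ ^ 2 / (4 * σ)) : ℂ) := by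
  set n := Module.finrank ℝ V
  have hconst : (4 * π * σ) ^ ((n : ℝ) / 2) * (π / σ) ^ ((n : ℝ) / 2) = (2 * π) ^ n := by
    rw [← mul_rpow (by positivity) (by positivity),
      show 4 * π * σ * (π / σ) = (2 * π) ^ 2 by field_simp; ring,
      ← rpow_natCast, ← rpow_natCast, ← rpow_mul (by positivity)]
    ring_nf
  rw [GaussianFourier.integral_cexp_neg_mul_sq_norm_add (by simpa using hσ), ← mul_assoc,
    show (π / σ : ℂ) = ((π / σ : ℝ) : ℂ) by push_cast; rfl,
    show ((n : ℂ) / 2) = ((n / 2 : ℝ) : ℂ) by push_cast; rfl,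
    ← ofReal_cpow (by positivity), ← ofReal_mul, hconst, ofReal_exp]
  push_cast
  rw [I_sq]
  ring_nf

theorem tendsto_exp_neg_div_nhdsGT_zero {c : ℝ} (hc : 0 < c) :
    Tendsto (fun σ => rexp (-c / σ)) (nhdsWithin 0 (Set.Ioi 0)) (nhds 0) :=
  (tendsto_exp_atBot.comp (tendsto_neg_atTop_atBot.comp
    (tendsto_inv_nhdsGT_zero.const_mul_atTop hc))).congr fun σ => by
      simp [div_eq_mul_inv]

theorem weightedSummary_mul_conj_weightedQuery {d t : ℕ}
    (h : Fin t → EuclideanSpace ℝ (Fin d)) (p : Fin t → ℝ) (j : Fin t)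
    (θ : EuclideanSpace ℝ (Fin d)) (l : Fin d) :
    weightedSummary h p θ l * (starRingEnd ℂ) (weightedQuery h j θ) =
      ∑ k, (p k * h k l / ((2 * π) ^ d : ℝ) : ℂ) * cexp (I * ⟪h k - h j, θ⟫) := by
  simp only [weightedSummary, weightedQuery, map_mul, map_div₀, conj_I, conj_ofReal,
    ← exp_conj]
  rw [Finset.mul_sum, Finset.sum_mul]
  refine Finset.sum_congr rfl fun k _ => ?_
  rw [real_inner_comm θ, inner_sub_right, ofReal_sub, mul_sub, sub_eq_add_neg,
    Complex.exp_add, ← neg_mul]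
  linear_combination (-(p k * h k l * cexp (I * ⟪θ, h k⟫) * cexp (-I * ⟪θ, h j⟫) /
    ((2 * π) ^ d : ℝ) : ℂ)) * I_sq

theorem four_pi_mul_rpow_smul_integral_weightedSummary_mul_conj_weightedQuery {d t : ℕ}
    (h : Fin t → EuclideanSpace ℝ (Fin d)) (p : Fin t → ℝ) (j : Fin t) {σ : ℝ} (hσ : 0 < σ) :
    ((4 * π * σ) ^ ((d : ℝ) / 2) : ℝ) •
        ∫ θ : EuclideanSpace ℝ (Fin d), (fun l : Fin d =>
          weightedSummary h p θ l * (starRingEnd ℂ) (weightedQuery h j θ) *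
            (rexp (-σ * ‖θ‖ ^ 2) : ℂ)) =
      fun l => ∑ k, (p k * h k l : ℂ) * (rexp (-‖h k - h j‖ ^ 2 / (4 * σ)) : ℂ) := by
  have hintegrand : (fun θ : EuclideanSpace ℝ (Fin d) => fun l : Fin d =>
      weightedSummary h p θ l * (starRingEnd ℂ) (weightedQuery h j θ) *
        (rexp (-σ * ‖θ‖ ^ 2) : ℂ)) = fun θ => ∑ k,
      cexp (-(σ : ℂ) * ‖θ‖ ^ 2 + I * ⟪h k - h j, θ⟫) •
        fun l : Fin d => (p k * h k l / ((2 * π) ^ d : ℝ) : ℂ) := by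
    funext θ l
    simp only [weightedSummary_mul_conj_weightedQuery, Finset.sum_mul, Finset.sum_apply,
      Pi.smul_apply, smul_eq_mul, Complex.exp_add, ofReal_exp]
    push_cast
    exact Finset.sum_congr rfl fun k _ => by ring
  have hintegrable (k : Fin t) := GaussianFourier.integrable_cexp_neg_mul_sq_norm_add
    (b := σ) (by simpa using hσ) I (h k - h j)
  rw [hintegrand, integral_finsetSum _ fun k _ => (hintegrable k).smul_const _]
  simp only [integral_smul_const, Finset.smul_sum, RCLike.real_smul_eq_coe_smul (K := ℂ),
    smul_smul]
  have hgauss (w : EuclideanSpace ℝ (Fin d)) :=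
    four_pi_mul_rpow_mul_integral_cexp_neg_mul_sq_norm_add hσ w
  simp only [finrank_euclideanSpace_fin] at hgauss
  funext l
  simp only [Finset.sum_apply, Pi.smul_apply, smul_eq_mul]
  refine Finset.sum_congr rfl fun k _ => ?_
  -- `integral_smul_const` leaves the integral with another (defeq) normed-space instance on `ℂ`
  erw [hgauss]
  field_simp

theorem weighted_retrieval_general
    (d t : ℕ) (h : Fin t → EuclideanSpace ℝ (Fin d)) (hdist : Function.Injective h)
    (p : Fin t → ℝ) (j : Fin t) :
    Tendsto
      (fun σ : ℝ =>
        ((4 * Real.pi * σ) ^ ((d : ℝ) / 2) : ℝ) •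
          ∫ θ : EuclideanSpace ℝ (Fin d),
            (fun l : Fin d =>
              weightedSummary h p θ l * (starRingEnd ℂ) (weightedQuery h j θ) *
                (Real.exp (-σ * ‖θ‖ ^ 2) : ℂ)))
      (nhdsWithin 0 (Set.Ioi 0))
      (nhds (fun l : Fin d => (p j : ℂ) * (h j l : ℂ))) := by
  refine Tendsto.congr' (eventuallyEq_of_mem self_mem_nhdsWithin fun σ hσ =>
    (four_pi_mul_rpow_smul_integral_weightedSummary_mul_conj_weightedQuery h p j hσ).symm) ?_
  have hdecay (k : Fin t) : Tendsto (fun σ => rexp (-‖h k - h j‖ ^ 2 / (4 * σ)))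
      (nhdsWithin 0 (Set.Ioi 0)) (nhds (if k = j then 1 else 0)) := by
    split_ifs with hkj
    · simp [hkj]
    · have hpos : 0 < ‖h k - h j‖ ^ 2 / 4 := by
        have : h k - h j ≠ 0 := sub_ne_zero.mpr (hdist.ne hkj)
        positivity
      simpa only [div_mul_eq_div_div, neg_div] using tendsto_exp_neg_div_nhdsGT_zero hpos
  rw [tendsto_pi_nhds]
  intro l
  simpa [apply_ite, Finset.sum_ite_eq'] using tendsto_finsetSum Finset.univ fun k _ =>
    tendsto_const_nhds (x := (p k * h k l : ℂ)).mul
      ((continuous_ofReal.tendsto _).comp (hdecay k))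

/-- **Weighted retrieval (regularized form of Corollary 3, part 1).**
For pairwise distinct `h₁, …, h_t ∈ ℝ^d` with weights `pₖ > 0` summing to `1`,
and every index `j`, as `σ → 0⁺` the Gaussian-regularized readout
`(4πσ)^{d/2} ∫ S(θ) * conj (w_j θ) * e^{−σ‖θ‖²} dθ` converges to `p_j • h_j`. -/
theorem weighted_retrieval
    (d t : ℕ) (h : Fin t → EuclideanSpace ℝ (Fin d)) (hdist : Function.Injective h)
    (p : Fin t → ℝ) (hp : ∀ k, 0 < p k) (hsum : ∑ k, p k = 1) (j : Fin t) :
    Tendsto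
      (fun σ : ℝ =>
        ((4 * Real.pi * σ) ^ ((d : ℝ) / 2) : ℝ) •
          ∫ θ : EuclideanSpace ℝ (Fin d),
            (fun l : Fin d =>
              weightedSummary h p θ l * (starRingEnd ℂ) (weightedQuery h j θ) *
                (Real.exp (-σ * ‖θ‖ ^ 2) : ℂ)))
      (nhdsWithin 0 (Set.Ioi 0))
      (nhds (fun l : Fin d => (p j : ℂ) * (h j l : ℂ))) :=
  weighted_retrieval_general d t h hdist p j
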